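/- The ground program P6 consisting of rules 'p(1) :- card{X:p(X)} = 1' and 'p(1) :- card{X:p(X)} = 0' has no Slog+ answer set: neither ∅ nor {p(1)} is an Slog+ answer set of P6. -/
import Mathlib


/- Program P6 = { p(1) :- card{X:p(X)} = 1.  p(1) :- card{X:p(X)} = 0. }
Atoms `p(0), p(1)` are encoded as `0, 1 : Fin 2`. -/

/-- `W` is a minimal support in `A` for the aggregate atom `card{X:p(X)} = k`:
`W ⊆ A`, every `V` with `W ⊆ V ⊆ A` has exactly `k` atoms, and no proper subset
of `W` has these properties. -/
def IsMinSupportP6 (k : ℕ) (A W : Finset (Fin 2)) : Prop :=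
  (W ⊆ A ∧ ∀ V, W ⊆ V → V ⊆ A → V.card = k) ∧
  ∀ U ⊂ W, ¬ (U ⊆ A ∧ ∀ V, U ⊆ V → V ⊆ A → V.card = k)

/-- `B` satisfies the Slog+ set reduct of P6 w.r.t. `A`, where the aggregate of the
rule with `card = 1` was replaced by `W1` and that of the rule with `card = 0` by
`W0` (each rule is removed when its aggregate is false in `A`). -/
def SatisfiesReductP6 (A W1 W0 B : Finset (Fin 2)) : Prop :=
  (A.card = 1 → (W1 ⊆ B → (1 : Fin 2) ∈ B)) ∧
  (A.card = 0 → (W0 ⊆ B → (1 : Fin 2) ∈ B))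

/-- `A` is an Slog+ answer set of P6: for some choice of minimal supports (needed only
for the rules whose aggregate is true in `A`), `A` is a minimal model of the
corresponding Slog+ set reduct. -/
def IsSlogAnswerSetP6 (A : Finset (Fin 2)) : Prop :=
  ∃ W1 W0, (A.card = 1 → IsMinSupportP6 1 A W1) ∧ (A.card = 0 → IsMinSupportP6 0 A W0) ∧
    SatisfiesReductP6 A W1 W0 A ∧ ∀ B ⊂ A, ¬ SatisfiesReductP6 A W1 W0 B

set_option synthInstance.maxHeartbeats 1000000 in
set_option synthInstance.maxSize 5000 in
instance : DecidablePred IsSlogAnswerSetP6 := fun A => by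
  unfold IsSlogAnswerSetP6 IsMinSupportP6 SatisfiesReductP6
  infer_instance

set_option maxHeartbeats 2000000 in
/-- P6 has no Slog+ answer set; in particular neither `∅` nor `{p(1)}` is one. -/
theorem P6_has_no_slog_answer_set :
    (∀ A : Finset (Fin 2), ¬ IsSlogAnswerSetP6 A) ∧
    ¬ IsSlogAnswerSetP6 ∅ ∧ ¬ IsSlogAnswerSetP6 {1} := by
  decide
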